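/- In minimal propositional logic ⊢_m (positive logic plus ¬φ ≈ φ→⊥), the Dragalin–Friedman map jφ = φ ∨ ⊥ is a nucleus, the stability axiom jφ ⊢ φ is equivalent over ⊢_m to ex falso quodlibet ⊥ ⊢ φ, and hence the strong j-extension of ⊢_m is intuitionistic logic ⊢_i. Moreover, the rule R→ is NOT compatible with j over ⊢_m: it is not the case that φ → (ψ ∨ ⊥) ⊢_m (φ → ψ) ∨ ⊥ for all φ, ψ. -/

import Mathlib

/-- A single-conclusion entailment relation on `S`. -/
structure IsEntailment {S : Type*} [DecidableEq S] (E : Finset S → S → Prop) : Prop where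
  refl : ∀ (U : Finset S) (a : S), a ∈ U → E U a
  mono : ∀ (U U' : Finset S) (a : S), E U a → E (U ∪ U') a
  cut : ∀ (V V' : Finset S) (a b : S), E V b → E (insert b V') a → E (V ∪ V') a

/-- A nucleus over an entailment relation. -/
structure IsNucleus {S : Type*} [DecidableEq S] (E : Finset S → S → Prop) (j : S → S) : Prop where
  lj : ∀ (U : Finset S) (a b : S), E (insert a U) (j b) → E (insert (j a) U) (j b)
  rj : ∀ (U : Finset S) (b : S), E U b → E U (j b)

/-- Propositional formulas over countably many atoms. -/
inductive Fml where
  | atom : ℕ → Fml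
  | top : Fml
  | bot : Fml
  | and : Fml → Fml → Fml
  | or : Fml → Fml → Fml
  | imp : Fml → Fml → Fml
  | neg : Fml → Fml
deriving DecidableEq

/-- Generators of positive propositional logic: an entailment relation closed
under the deduction rule R→ and the standard axioms for ∧, ∨, →, ⊤. -/
structure PosGen (E : Finset Fml → Fml → Prop) : Prop where
  ent : IsEntailment E
  rimp : ∀ (Γ : Finset Fml) (φ ψ : Fml), E (insert φ Γ) ψ → E Γ (φ.imp ψ)
  andI : ∀ φ ψ : Fml, E {φ, ψ} (φ.and ψ)
  andE1 : ∀ φ ψ : Fml, E {φ.and ψ} φ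
  andE2 : ∀ φ ψ : Fml, E {φ.and ψ} ψ
  orI1 : ∀ φ ψ : Fml, E {φ} (φ.or ψ)
  orI2 : ∀ φ ψ : Fml, E {ψ} (φ.or ψ)
  orE : ∀ φ ψ δ : Fml, E {φ.or ψ, φ.imp δ, ψ.imp δ} δ
  mp : ∀ φ ψ : Fml, E {φ, φ.imp ψ} ψ
  topI : E ∅ Fml.top

/-- Generators of minimal logic: positive logic plus `¬φ ≈ φ → ⊥`. -/
structure MinGen (E : Finset Fml → Fml → Prop) extends PosGen E : Prop where
  pc1 : ∀ φ : Fml, E {φ.imp .bot} φ.neg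
  pc2 : ∀ φ : Fml, E {φ.neg} (φ.imp .bot)

/-- Generators of intuitionistic logic: minimal logic plus ex falso quodlibet. -/
structure IntGen (E : Finset Fml → Fml → Prop) extends MinGen E : Prop where
  efq : ∀ φ : Fml, E {Fml.bot} φ

/-- Generators of classical logic: intuitionistic logic plus reductio ad absurdum. -/
structure ClGen (E : Finset Fml → Fml → Prop) extends IntGen E : Prop where
  raa : ∀ φ : Fml, E {φ.neg.neg} φ

/-- Minimal propositional logic `⊢_m`. -/
def MinD (Γ : Finset Fml) (φ : Fml) : Prop :=
  ∀ E : Finset Fml → Fml → Prop, MinGen E → E Γ φ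

/-- Intuitionistic propositional logic `⊢_i`. -/
def IntD (Γ : Finset Fml) (φ : Fml) : Prop :=
  ∀ E : Finset Fml → Fml → Prop, IntGen E → E Γ φ

/-- Classical propositional logic `⊢_c`. -/
def ClD (Γ : Finset Fml) (φ : Fml) : Prop :=
  ∀ E : Finset Fml → Fml → Prop, ClGen E → E Γ φ

/-- Minimal logic plus the stability axioms `φ ∨ ⊥ ⊢ φ`: the strong
`j`-extension of `⊢_m` for the Dragalin–Friedman nucleus. -/
def MinStabD (Γ : Finset Fml) (φ : Fml) : Prop :=
  ∀ E : Finset Fml → Fml → Prop, MinGen E → (∀ χ : Fml, E {χ.or .bot} χ) → E Γ φ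

/-! `φ ∨ ⊥` is a nucleus over any positive logic because `∨`-elimination lets a hypothesis
`φ ∨ ⊥` be split into `φ` and `⊥`, and `ψ ∨ ⊥` follows from either; the same case split, read
against `⊥ ⊢ φ ∨ ⊥`, makes `φ ∨ ⊥ ⊢ φ` and `⊥ ⊢ φ` interderivable, so adding stability to minimal
logic is adding ex falso. Compatibility with R→ fails in a two-world Kripke model for minimal
logic in which `⊥` is forced at the upper world only: there `⊥ → p ∨ ⊥` is valid, while
`(⊥ → p) ∨ ⊥` fails at the lower world. -/

namespace IsEntailment

variable {S : Type*} [DecidableEq S] {E : Finset S → S → Prop}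

theorem weaken (hE : IsEntailment E) {U V : Finset S} {a : S} (h : E U a) (hUV : U ⊆ V) :
    E V a := by
  simpa [Finset.union_eq_right.mpr hUV] using hE.mono U V a h

theorem cut' (hE : IsEntailment E) {V : Finset S} {a b : S} (hb : E V b)
    (h : E (insert b V) a) : E V a := by
  simpa using hE.cut V V a b hb h

theorem cut_of_forall_mem (hE : IsEntailment E) {Γ Δ : Finset S} {b : S}
    (hΔ : ∀ a ∈ Δ, E Γ a) (h : E Δ b) : E Γ b := by
  suffices key : ∀ Δ : Finset S, (∀ a ∈ Δ, E Γ a) → E (Δ ∪ Γ) b → E Γ b from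
    key Δ hΔ (hE.mono Δ Γ b h)
  intro Δ
  induction Δ using Finset.induction_on with
  | empty => simp
  | insert a Δ _ ih =>
    intro hΔ h
    rw [Finset.insert_union] at h
    refine ih (fun x hx => hΔ x (Finset.mem_insert_of_mem hx)) (hE.cut' ?_ h)
    exact hE.weaken (hΔ a (Finset.mem_insert_self a Δ)) Finset.subset_union_right

theorem cut_singleton (hE : IsEntailment E) {U : Finset S} {a b : S} (ha : E U a)
    (hab : E {a} b) : E U b :=
  hE.cut_of_forall_mem (fun _ hx => Finset.mem_singleton.1 hx ▸ ha) hab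

end IsEntailment

namespace PosGen

variable {E : Finset Fml → Fml → Prop}

theorem or_elim (hE : PosGen E) {Γ : Finset Fml} {φ ψ δ : Fml} (h : E Γ (φ.or ψ))
    (h₁ : E (insert φ Γ) δ) (h₂ : E (insert ψ Γ) δ) : E Γ δ := by
  refine hE.ent.cut_of_forall_mem ?_ (hE.orE φ ψ δ)
  simp only [Finset.mem_insert, Finset.mem_singleton]
  rintro a (rfl | rfl | rfl)
  exacts [h, hE.rimp Γ φ δ h₁, hE.rimp Γ ψ δ h₂]

theorem isNucleus_orBot (hE : PosGen E) : IsNucleus E (fun φ : Fml => φ.or .bot) where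
  lj U a b h := by
    refine hE.or_elim (hE.ent.refl _ _ (Finset.mem_insert_self _ _)) ?_ ?_
    · exact hE.ent.weaken h (Finset.insert_subset_insert _ (Finset.subset_insert _ _))
    · exact hE.ent.weaken (hE.orI2 b .bot)
        (Finset.singleton_subset_iff.2 (Finset.mem_insert_self _ _))
  rj U b h := hE.ent.cut_singleton h (hE.orI1 b .bot)

theorem orBot_entails_iff_bot_entails (hE : PosGen E) (φ : Fml) :
    E {φ.or .bot} φ ↔ E {Fml.bot} φ := by
  refine ⟨hE.ent.cut_singleton (hE.orI2 φ .bot), fun h => ?_⟩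
  refine hE.or_elim (hE.ent.refl _ _ (Finset.mem_singleton_self _))
    (hE.ent.refl _ _ (Finset.mem_insert_self _ _)) ?_
  exact hE.ent.weaken h (Finset.singleton_subset_iff.2 (Finset.mem_insert_self _ _))

end PosGen

theorem minGen_minD : MinGen MinD where
  ent := ⟨fun U a h _ hE => hE.ent.refl U a h,
          fun U U' a h E hE => hE.ent.mono U U' a (h E hE),
          fun V V' a b h₁ h₂ E hE => hE.ent.cut V V' a b (h₁ E hE) (h₂ E hE)⟩
  rimp Γ φ ψ h E hE := hE.rimp Γ φ ψ (h E hE)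
  andI φ ψ _ hE := hE.andI φ ψ
  andE1 φ ψ _ hE := hE.andE1 φ ψ
  andE2 φ ψ _ hE := hE.andE2 φ ψ
  orI1 φ ψ _ hE := hE.orI1 φ ψ
  orI2 φ ψ _ hE := hE.orI2 φ ψ
  orE φ ψ δ _ hE := hE.orE φ ψ δ
  mp φ ψ _ hE := hE.mp φ ψ
  topI _ hE := hE.topI
  pc1 φ _ hE := hE.pc1 φ
  pc2 φ _ hE := hE.pc2 φ

theorem intGen_iff {E : Finset Fml → Fml → Prop} :
    IntGen E ↔ MinGen E ∧ ∀ φ : Fml, E {Fml.bot} φ :=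
  ⟨fun h => ⟨h.toMinGen, h.efq⟩, fun h => ⟨h.1, h.2⟩⟩

theorem minStabD_iff_intD (Γ : Finset Fml) (φ : Fml) : MinStabD Γ φ ↔ IntD Γ φ := by
  unfold MinStabD IntD
  refine forall_congr' fun E => ?_
  rw [intGen_iff, and_imp]
  exact imp_congr_right fun hE =>
    imp_congr_left (forall_congr' hE.toPosGen.orBot_entails_iff_bot_entails)

namespace Fml

variable {W : Type*} [Preorder W] (val : ℕ → W → Prop) (fal : W → Prop)

/-- `fal` is the set of worlds forcing `⊥`; unlike in intuitionistic Kripke models it need not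
be empty. -/
def Forces : Fml → W → Prop
  | atom n, w => val n w
  | top, _ => True
  | bot, w => fal w
  | and φ ψ, w => φ.Forces w ∧ ψ.Forces w
  | or φ ψ, w => φ.Forces w ∨ ψ.Forces w
  | imp φ ψ, w => ∀ w', w ≤ w' → φ.Forces w' → ψ.Forces w'
  | neg φ, w => ∀ w', w ≤ w' → φ.Forces w' → fal w'

def KripkeEntails (Γ : Finset Fml) (φ : Fml) : Prop :=
  ∀ w : W, (∀ γ ∈ Γ, γ.Forces val fal w) → φ.Forces val fal w

variable {val fal}

theorem Forces.mono (hval : ∀ n, Monotone (val n)) (hfal : Monotone fal) :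
    ∀ (φ : Fml) {w w' : W}, w ≤ w' → φ.Forces val fal w → φ.Forces val fal w'
  | atom n, _, _, hw, h => hval n hw h
  | top, _, _, _, h => h
  | bot, _, _, hw, h => hfal hw h
  | and φ ψ, _, _, hw, h => ⟨mono hval hfal φ hw h.1, mono hval hfal ψ hw h.2⟩
  | or φ ψ, _, _, hw, h => h.imp (mono hval hfal φ hw) (mono hval hfal ψ hw)
  | imp _ _, _, _, hw, h => fun w'' hw'' => h w'' (hw.trans hw'')
  | neg _, _, _, hw, h => fun w'' hw'' => h w'' (hw.trans hw'')

theorem minGen_kripkeEntails (hval : ∀ n, Monotone (val n)) (hfal : Monotone fal) :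
    MinGen (KripkeEntails (W := W) val fal) where
  ent := by
    refine ⟨fun U a h w hw => hw a h, fun U U' a h w hw => h w fun γ hγ => hw γ
      (Finset.mem_union_left _ hγ), fun V V' a b h₁ h₂ w hw => h₂ w ?_⟩
    simp only [Finset.mem_insert, forall_eq_or_imp]
    exact ⟨h₁ w fun γ hγ => hw γ (Finset.mem_union_left _ hγ),
      fun γ hγ => hw γ (Finset.mem_union_right _ hγ)⟩
  rimp Γ φ ψ h w hw w' hww' hφ := by
    refine h w' ?_
    simp only [Finset.mem_insert, forall_eq_or_imp]
    exact ⟨hφ, fun γ hγ => Forces.mono hval hfal γ hww' (hw γ hγ)⟩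
  andI φ ψ w hw := ⟨hw φ (by simp), hw ψ (by simp)⟩
  andE1 φ ψ w hw := (hw (φ.and ψ) (by simp)).1
  andE2 φ ψ w hw := (hw (φ.and ψ) (by simp)).2
  orI1 φ ψ w hw := Or.inl (hw φ (by simp))
  orI2 φ ψ w hw := Or.inr (hw ψ (by simp))
  orE φ ψ δ w hw :=
    (hw (φ.or ψ) (by simp)).elim (hw (φ.imp δ) (by simp) w le_rfl)
      (hw (ψ.imp δ) (by simp) w le_rfl)
  mp φ ψ w hw := hw (φ.imp ψ) (by simp) w le_rfl (hw φ (by simp))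
  topI _ _ := trivial
  pc1 φ w hw := hw (φ.imp .bot) (by simp)
  pc2 φ w hw := hw φ.neg (by simp)

end Fml

theorem not_forall_minD_imp_orBot :
    ¬ ∀ φ ψ : Fml, MinD {φ.imp (ψ.or .bot)} ((φ.imp ψ).or .bot) := by
  intro h
  -- Worlds are propositions ordered by implication; `⊥` is forced exactly at the true one.
  have hK := h .bot (.atom 0) _ (Fml.minGen_kripkeEntails (W := Prop) (val := fun _ _ => False)
    (fun _ => monotone_const) (fal := id) monotone_id) False (by simp [Fml.Forces])
  simp only [Fml.Forces] at hK
  exact hK.elim (fun himp => himp True le_top trivial) id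

/-- the Dragalin–Friedman map `jφ = φ ∨ ⊥` is a nucleus over
minimal logic; stability `jφ ⊢ φ` is equivalent over `⊢_m` to ex falso
quodlibet `⊥ ⊢ φ`; hence the strong `j`-extension of `⊢_m` is intuitionistic
logic; and R→ is not compatible with `j` over `⊢_m`. -/
theorem dragalin_friedman :
    IsNucleus MinD (fun φ : Fml => φ.or .bot) ∧
    (∀ φ : Fml, (MinD {φ.or .bot} φ ↔ MinD {Fml.bot} φ)) ∧
    (∀ (Γ : Finset Fml) (φ : Fml), MinStabD Γ φ ↔ IntD Γ φ) ∧
    ¬ (∀ φ ψ : Fml, MinD {φ.imp (ψ.or .bot)} ((φ.imp ψ).or .bot)) :=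
  ⟨minGen_minD.toPosGen.isNucleus_orBot, minGen_minD.toPosGen.orBot_entails_iff_bot_entails,
    minStabD_iff_intD, not_forall_minD_imp_orBot⟩
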